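/- arXiv:2308.16694 — 3 statements merged into one kernel-verified Lean document; each statement's English description precedes it below -/
import Mathlib

section
/- Let Φ = (φ_n) be a superadditive sequence of continuous potentials with bounded variations on a subshift of finite type, and suppose μ is a σ-invariant Gibbs-type measure for Φ. Then μ is an equilibrium state for Φ: h(μ, σ) + F_*(Φ, μ) ≥ P_top(Φ, σ), where F_*(Φ, μ) = lim_n (1/n) ∫ φ_n dμ. -/
open Filter Topology MeasureTheory
open scoped Classical

open Filter Topology MeasureTheory
open scoped Classical

/-- The left shift on the full shift space. -/
def shiftMap {q : ℕ} (x : ℕ → Fin q) : ℕ → Fin q := fun n => x (n + 1)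

/-- The one-sided subshift of finite type with adjacency matrix `T`. -/
def SigmaT {q : ℕ} (T : Fin q → Fin q → Bool) : Set (ℕ → Fin q) :=
  {x | ∀ n, T (x n) (x (n + 1)) = true}

/-- A word `I` of length `n` is admissible if consecutive letters are `T`-compatible. -/
def AdmWord {q : ℕ} (T : Fin q → Fin q → Bool) {n : ℕ} (I : Fin n → Fin q) : Prop :=
  ∀ i : ℕ, (h : i + 1 < n) → T (I ⟨i, Nat.lt_of_succ_lt h⟩) (I ⟨i + 1, h⟩) = true

/-- The cylinder (inside the subshift) of a word. -/
def cylW {q : ℕ} (T : Fin q → Fin q → Bool) {n : ℕ} (I : Fin n → Fin q) : Set (ℕ → Fin q) :=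
  {x | x ∈ SigmaT T ∧ ∀ i : Fin n, x (i : ℕ) = I i}

/-- The cylinder `[x]_n` (inside the subshift) of a point. -/
def cylPt {q : ℕ} (T : Fin q → Fin q → Bool) (x : ℕ → Fin q) (n : ℕ) : Set (ℕ → Fin q) :=
  {y | y ∈ SigmaT T ∧ ∀ i < n, y i = x i}

/-- Primitivity of the adjacency matrix: all sufficiently long connections exist. -/
def Primitive {q : ℕ} (T : Fin q → Fin q → Bool) : Prop :=
  ∃ N : ℕ, 0 < N ∧ ∀ n, N ≤ n → ∀ i j : Fin q, ∃ w : ℕ → Fin q,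
    w 0 = i ∧ w n = j ∧ ∀ k < n, T (w k) (w (k + 1)) = true

/-- Superadditivity of a sequence of potentials on the subshift. -/
def Superadditive {q : ℕ} (T : Fin q → Fin q → Bool) (φ : ℕ → (ℕ → Fin q) → ℝ) : Prop :=
  ∀ n m : ℕ, 0 < n → 0 < m → ∀ x ∈ SigmaT T,
    φ n x + φ m (shiftMap^[n] x) ≤ φ (n + m) x

/-- Bounded variations of a sequence of potentials. -/
def BddVar {q : ℕ} (T : Fin q → Fin q → Bool) (φ : ℕ → (ℕ → Fin q) → ℝ) : Prop :=
  ∃ V : ℝ, ∀ n : ℕ, ∀ x ∈ SigmaT T, ∀ y ∈ SigmaT T,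
    (∀ i < n, y i = x i) → |φ n x - φ n y| ≤ V

/-- `(1/n) log Σ_{I ∈ C_n} exp(inf_{x ∈ [I]} φ_n(x))`. -/
noncomputable def pressureSeq {q : ℕ} (T : Fin q → Fin q → Bool)
    (φ : ℕ → (ℕ → Fin q) → ℝ) (n : ℕ) : ℝ :=
  (n : ℝ)⁻¹ * Real.log
    (∑ I ∈ Finset.univ.filter (fun I : Fin n → Fin q => AdmWord T I),
      Real.exp (sInf (φ n '' cylW T I)))

/-!
Write `Hₙ` and `Fₙ` for the `n`-th terms of the limsup and of the supremum. Every point `x` of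
an `n`-cylinder `[I]` is a centre of it, so the upper Gibbs bound gives
`log μ[I] ≤ log C₂ - nP + φₙ` on all of `[I]`. Integrating over `[I]` and summing over the words
gives `∑ μ[I] log μ[I] ≤ log C₂ - nP + ∫ φₙ dμ`, i.e. `Hₙ + Fₙ ≥ P - (log C₂)/n`. Since
`Hₙ ≤ log q` (the entropy of a distribution on at most `qⁿ` words), the real `limsup Hₙ` is not
a junk value, and letting `n → ∞` gives `P ≤ limsup Hₙ + sup Fₙ`.
-/

open Real

theorem neg_sum_mul_log_le_log_card {ι : Type*} (s : Finset ι) {p : ι → ℝ}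
    (hp : ∀ i ∈ s, 0 ≤ p i) (hsum : ∑ i ∈ s, p i = 1) :
    -∑ i ∈ s, p i * log (p i) ≤ log s.card := by
  have hcard : (0 : ℝ) < s.card := by
    rcases s.eq_empty_or_nonempty with rfl | hne
    · simp at hsum
    · exact_mod_cast hne.card_pos
  -- `log t ≤ t - 1` at `t = 1 / (#s p i)`
  have key : ∀ i ∈ s, -(p i * log (p i)) ≤ p i * log s.card + ((s.card : ℝ)⁻¹ - p i) := by
    intro i hi
    rcases (hp i hi).eq_or_lt with h0 | hpos
    · simp [← h0]
    · have := log_le_sub_one_of_pos (inv_pos.2 (mul_pos hcard hpos))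
      rw [log_inv, log_mul hcard.ne' hpos.ne'] at this
      have h' : p i * ((s.card : ℝ) * p i)⁻¹ = (s.card : ℝ)⁻¹ := by field_simp
      have := mul_le_mul_of_nonneg_left this hpos.le
      rw [mul_sub, h', mul_one] at this
      linarith
  calc -∑ i ∈ s, p i * log (p i) = ∑ i ∈ s, -(p i * log (p i)) := by rw [Finset.sum_neg_distrib]
    _ ≤ ∑ i ∈ s, (p i * log s.card + ((s.card : ℝ)⁻¹ - p i)) := Finset.sum_le_sum key
    _ = log s.card := by
      rw [Finset.sum_add_distrib, ← Finset.sum_mul, hsum, Finset.sum_sub_distrib, hsum]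
      simp [hcard.ne']

theorem mul_log_measureReal_le_setIntegral {α : Type*} [MeasurableSpace α] {μ : Measure α}
    [IsFiniteMeasure μ] {s : Set α} (hs : MeasurableSet s) {f : α → ℝ}
    (hf : IntegrableOn f s μ) {c : ℝ} (h : ∀ y ∈ s, μ.real s ≤ exp (c + f y)) :
    μ.real s * log (μ.real s) ≤ μ.real s * c + ∫ y in s, f y ∂μ := by
  rcases measureReal_nonneg.eq_or_lt with h0 | hpos
  · have hnull : μ s = 0 := (measureReal_eq_zero_iff).1 h0.symm
    simp [← h0, Measure.restrict_eq_zero.2 hnull]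
  · have hlog : ∀ y ∈ s, log (μ.real s) ≤ c + f y := fun y hy =>
      (log_le_iff_le_exp hpos).2 (h y hy)
    have hconst : ∀ a : ℝ, IntegrableOn (fun _ => a) s μ := fun a => integrableOn_const
    calc μ.real s * log (μ.real s) = ∫ _ in s, log (μ.real s) ∂μ := by
          rw [setIntegral_const, smul_eq_mul]
      _ ≤ ∫ y in s, (c + f y) ∂μ := setIntegral_mono_on (hconst _) ((hconst c).add hf) hs hlog
      _ = μ.real s * c + ∫ y in s, f y ∂μ := by
          rw [integral_add (hconst c) hf, setIntegral_const, smul_eq_mul]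

theorem EReal.coe_le_limsup_add_biSup {H F e : ℕ → ℝ} {P : ℝ}
    (hH : atTop.IsBoundedUnder (· ≤ ·) H) (he : Tendsto e atTop (𝓝 0))
    (hP : ∀ᶠ n in atTop, P ≤ H n + F n + e n) :
    (P : EReal) ≤ ((atTop.limsup H : ℝ) : EReal) + ⨆ n ∈ Set.Ici 1, (F n : EReal) := by
  set S : EReal := ⨆ n ∈ Set.Ici 1, (F n : EReal)
  have hFS : ∀ n, 1 ≤ n → (F n : EReal) ≤ S := fun n hn => le_biSup (fun n => (F n : EReal)) hn
  have hS_ne_bot : S ≠ ⊥ := ne_bot_of_le_ne_bot (EReal.coe_ne_bot _) (hFS 1 le_rfl)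
  rcases eq_or_ne S ⊤ with hS | hS
  · rw [hS, EReal.add_top_of_ne_bot (EReal.coe_ne_bot _)]
    exact le_top
  · lift S to ℝ using ⟨hS, hS_ne_bot⟩ with s hs
    have hlow : (fun n => P - s - e n) ≤ᶠ[atTop] H := by
      filter_upwards [hP, eventually_ge_atTop 1] with n hPn hn
      have : F n ≤ s := EReal.coe_le_coe_iff.1 (hs ▸ hFS n hn)
      linarith
    have hlim : Tendsto (fun n => P - s - e n) atTop (𝓝 (P - s)) := by
      simpa using tendsto_const_nhds.sub he
    have : P - s ≤ atTop.limsup H :=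
      hlim.limsup_eq ▸ limsup_le_limsup hlow hlim.isCoboundedUnder_le hH
    rw [← EReal.coe_add, EReal.coe_le_coe_iff]
    linarith

section Subshift
variable {q : ℕ} (T : Fin q → Fin q → Bool)

theorem isClosed_SigmaT : IsClosed (SigmaT T) := by
  simp only [SigmaT, Set.ofPred_forall]
  exact isClosed_iInter fun n => isClosed_eq (by fun_prop) continuous_const

theorem isClosed_cylW {n : ℕ} (I : Fin n → Fin q) : IsClosed (cylW T I) := by
  simp only [cylW, Set.ofPred_and, Set.ofPred_forall]
  exact (isClosed_SigmaT T).inter <| isClosed_iInter fun i =>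
    isClosed_eq (continuous_apply _) continuous_const

theorem cylW_eq_cylPt {n : ℕ} {I : Fin n → Fin q} {x : ℕ → Fin q} (hx : x ∈ cylW T I) :
    cylW T I = cylPt T x n := by
  ext y
  refine ⟨fun ⟨hy, h⟩ => ⟨hy, fun i hi => ?_⟩, fun ⟨hy, h⟩ => ⟨hy, fun i => ?_⟩⟩
  · rw [h ⟨i, hi⟩, hx.2 ⟨i, hi⟩]
  · rw [h i i.2, hx.2 i]

theorem pairwise_disjoint_cylW (n : ℕ) :
    Pairwise (Function.onFun Disjoint (cylW T (n := n))) := fun I J hIJ =>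
  Set.disjoint_left.2 fun x hxI hxJ => hIJ <| funext fun i => by rw [← hxI.2 i, ← hxJ.2 i]

theorem biUnion_cylW (n : ℕ) :
    ⋃ I ∈ Finset.univ.filter (fun I : Fin n → Fin q => AdmWord T I), cylW T I = SigmaT T := by
  refine subset_antisymm (Set.iUnion₂_subset fun I _ x hx => hx.1) fun x hx => ?_
  exact Set.mem_biUnion (Finset.mem_filter.2 ⟨Finset.mem_univ _, fun i _ => hx i⟩)
    (show x ∈ cylW T (fun i : Fin n => x i) from ⟨hx, fun _ => rfl⟩)

end Subshift

section Measure
variable {q : ℕ} {T : Fin q → Fin q → Bool} {μ : Measure (ℕ → Fin q)}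

theorem sum_measureReal_cylW [IsFiniteMeasure μ] (n : ℕ) :
    ∑ I ∈ Finset.univ.filter (fun I : Fin n → Fin q => AdmWord T I), μ.real (cylW T I) =
      μ.real (SigmaT T) := by
  rw [← measureReal_biUnion_finset ((pairwise_disjoint_cylW T n).set_pairwise _)
    fun I _ => (isClosed_cylW T I).measurableSet, biUnion_cylW]

theorem setIntegral_SigmaT_eq_sum_cylW {f : (ℕ → Fin q) → ℝ} (hf : IntegrableOn f (SigmaT T) μ)
    (n : ℕ) :
    ∫ x in SigmaT T, f x ∂μ =
      ∑ I ∈ Finset.univ.filter (fun I : Fin n → Fin q => AdmWord T I), ∫ x in cylW T I, f x ∂μ := by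
  rw [← integral_biUnion_finset _ (fun I _ => (isClosed_cylW T I).measurableSet)
    ((pairwise_disjoint_cylW T n).set_pairwise _) fun I _ => hf.mono_set fun x hx => hx.1,
    biUnion_cylW]

theorem sum_mul_log_measureReal_cylW_le [IsFiniteMeasure μ] {n : ℕ} {f : (ℕ → Fin q) → ℝ}
    {c : ℝ} (hf : IntegrableOn f (SigmaT T) μ)
    (hμ : ∀ x ∈ SigmaT T, μ.real (cylPt T x n) ≤ exp (c + f x)) :
    ∑ I ∈ Finset.univ.filter (fun I : Fin n → Fin q => AdmWord T I),
        μ.real (cylW T I) * log (μ.real (cylW T I)) ≤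
      μ.real (SigmaT T) * c + ∫ x in SigmaT T, f x ∂μ := by
  have hcyl : ∀ I : Fin n → Fin q, μ.real (cylW T I) * log (μ.real (cylW T I)) ≤
      μ.real (cylW T I) * c + ∫ x in cylW T I, f x ∂μ := fun I =>
    mul_log_measureReal_le_setIntegral (isClosed_cylW T I).measurableSet
      (hf.mono_set fun x hx => hx.1) fun y hy => cylW_eq_cylPt T hy ▸ hμ y hy.1
  calc _ ≤ ∑ I ∈ Finset.univ.filter (fun I : Fin n → Fin q => AdmWord T I),
        (μ.real (cylW T I) * c + ∫ x in cylW T I, f x ∂μ) := Finset.sum_le_sum fun I _ => hcyl I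
    _ = _ := by
      rw [Finset.sum_add_distrib, ← Finset.sum_mul, sum_measureReal_cylW,
        setIntegral_SigmaT_eq_sum_cylW hf]

theorem neg_sum_mul_log_measureReal_cylW_le [IsFiniteMeasure μ] (hμ : μ.real (SigmaT T) = 1)
    (n : ℕ) :
    -∑ I ∈ Finset.univ.filter (fun I : Fin n → Fin q => AdmWord T I),
        μ.real (cylW T I) * log (μ.real (cylW T I)) ≤ n * log q := by
  refine (neg_sum_mul_log_le_log_card _ (fun _ _ => measureReal_nonneg)
    ((sum_measureReal_cylW n).trans hμ)).trans ?_
  have hcard : (Finset.univ.filter (fun I : Fin n → Fin q => AdmWord T I)).card ≤ q ^ n := by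
    simpa using Finset.card_filter_le Finset.univ (fun I : Fin n → Fin q => AdmWord T I)
  rcases Nat.eq_zero_or_pos (Finset.univ.filter (fun I : Fin n → Fin q => AdmWord T I)).card
    with h0 | hpos
  · rw [h0, Nat.cast_zero, log_zero]
    exact mul_nonneg n.cast_nonneg (log_natCast_nonneg q)
  · rw [← log_pow]
    exact log_le_log (by exact_mod_cast hpos) (by exact_mod_cast hcard)

end Measure

theorem stmt3_general {q : ℕ} (T : Fin q → Fin q → Bool)
    (φ : ℕ → (ℕ → Fin q) → ℝ) (hcont : ∀ n, ContinuousOn (φ n) (SigmaT T))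
    (μ : Measure (ℕ → Fin q)) [IsProbabilityMeasure μ]
    (hfull : μ (SigmaT T) = 1)
    (C₁ C₂ P : ℝ) (hC₂ : 0 < C₂)
    (hGibbs : ∀ x ∈ SigmaT T, ∀ n : ℕ, 0 < n →
      C₁ * Real.exp (-(P * n) + φ n x) ≤ (μ (cylPt T x n)).toReal ∧
      (μ (cylPt T x n)).toReal ≤ C₂ * Real.exp (-(P * n) + φ n x)) :
    (P : EReal) ≤
      ((atTop.limsup fun n : ℕ => -(n : ℝ)⁻¹ *
          ∑ I ∈ Finset.univ.filter (fun I : Fin n → Fin q => AdmWord T I),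
            (μ (cylW T I)).toReal * Real.log (μ (cylW T I)).toReal : ℝ) : EReal) +
        ⨆ n ∈ Set.Ici (1 : ℕ),
          (((n : ℝ)⁻¹ * ∫ x in SigmaT T, φ n x ∂μ : ℝ) : EReal) := by
  have hμ : μ.real (SigmaT T) = 1 := by simp [measureReal_def, hfull]
  have hint n : IntegrableOn (φ n) (SigmaT T) μ :=
    (hcont n).integrableOn_compact (isClosed_SigmaT T).isCompact
  refine EReal.coe_le_limsup_add_biSup (e := fun n => log C₂ * (n : ℝ)⁻¹) ?_
    (by simpa using tendsto_inv_atTop_nhds_zero_nat.const_mul (log C₂)) ?_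
  · refine ⟨log q, eventually_map.2 <| (eventually_ge_atTop 1).mono fun n hn => ?_⟩
    have hn' : (0 : ℝ) < n := by exact_mod_cast hn
    dsimp only
    rw [neg_mul, ← mul_neg, inv_mul_le_iff₀ hn']
    exact neg_sum_mul_log_measureReal_cylW_le hμ n
  · filter_upwards [eventually_ge_atTop 1] with n hn
    have hGibbs' : ∀ x ∈ SigmaT T, μ.real (cylPt T x n) ≤ exp ((log C₂ - P * n) + φ n x) := by
      intro x hx
      rw [show log C₂ - P * n + φ n x = log C₂ + (-(P * n) + φ n x) by ring, exp_add, exp_log hC₂]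
      exact (hGibbs x hx n hn).2
    have hsum := sum_mul_log_measureReal_cylW_le (hint n) hGibbs'
    rw [hμ, one_mul] at hsum
    simp only [← measureReal_def]
    field_simp
    linarith

/-- a σ-invariant Gibbs-type measure for a superadditive sequence with
bounded variations is an equilibrium state: `h(μ,σ) + F_*(Φ,μ) ≥ P_top(Φ,σ)`, where the
entropy is expressed as the limsup of the partition sums and
`F_*(Φ,μ) = sup_{n ≥ 1} (1/n) ∫ φ_n dμ (= lim_n (1/n) ∫ φ_n dμ)`. -/
theorem stmt3 {q : ℕ} (hq : 0 < q) (T : Fin q → Fin q → Bool) (hprim : Primitive T)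
    (φ : ℕ → (ℕ → Fin q) → ℝ) (hcont : ∀ n, ContinuousOn (φ n) (SigmaT T))
    (hsup : Superadditive T φ) (hbv : BddVar T φ)
    (μ : Measure (ℕ → Fin q)) [IsProbabilityMeasure μ]
    (hinv : MeasurePreserving shiftMap μ μ) (hfull : μ (SigmaT T) = 1)
    (C₁ C₂ P : ℝ) (hC₁ : 0 < C₁) (hC₂ : 0 < C₂)
    (hGibbs : ∀ x ∈ SigmaT T, ∀ n : ℕ, 0 < n →
      C₁ * Real.exp (-(P * n) + φ n x) ≤ (μ (cylPt T x n)).toReal ∧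
      (μ (cylPt T x n)).toReal ≤ C₂ * Real.exp (-(P * n) + φ n x))
    (hPtop : Tendsto (pressureSeq T φ) atTop (𝓝 P)) :
    (P : EReal) ≤
      ((atTop.limsup fun n : ℕ => -(n : ℝ)⁻¹ *
          ∑ I ∈ Finset.univ.filter (fun I : Fin n → Fin q => AdmWord T I),
            (μ (cylW T I)).toReal * Real.log (μ (cylW T I)).toReal : ℝ) : EReal) +
        ⨆ n ∈ Set.Ici (1 : ℕ),
          (((n : ℝ)⁻¹ * ∫ x in SigmaT T, φ n x ∂μ : ℝ) : EReal) :=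
  stmt3_general T φ hcont μ hfull C₁ C₂ P hC₂ hGibbs
end

section
/- For every invertible real d×d matrix A and nonzero vectors u, v ∈ ℝ^d: (i) δ_P(ῡ₊(A*), v̄) ≤ ‖Av‖/(‖A‖‖v‖) ≤ δ_P(ῡ₊(A*), v̄) + γ₁₂(A), where δ_P(ū, v̄) = |⟨u,v⟩|/(‖u‖‖v‖), ῡ₊(A) is the projective direction of the top singular vector of A in its image, and γ₁₂(A) = σ₂(A)/σ₁(A) is the ratio of second to first singular values. -/
/-!
With `D = diagonal s` and `u = L v` we have `‖u‖ = ‖v‖`, `⟪Lᵀ e₀, v⟫ = u₀` and, `K` and `L`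
being isometries, `‖A v‖ = ‖D u‖` and `‖A‖ = ‖D‖ = s₀`. The claim becomes
`s₀ |u₀| ≤ ‖D u‖ ≤ s₀ |u₀| + s₁ ‖u‖`: the lower bound is the `0`-th coordinate of `D u`, and the
upper bound is the triangle inequality for `D u = s₀ u₀ e₀ + (D u - s₀ u₀ e₀)`, whose second
summand has coordinates bounded by `s₁ |uⱼ|`.
-/

open Matrix

/-- The continuous linear map on Euclidean space induced by a matrix. -/
noncomputable def euc {d : ℕ} (A : Matrix (Fin d) (Fin d) ℝ) :
    EuclideanSpace ℝ (Fin d) →L[ℝ] EuclideanSpace ℝ (Fin d) :=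
  Matrix.toEuclideanCLM (𝕜 := ℝ) A

/-- The projective quantity `δ_P(ū, v̄) = |⟨u,v⟩| / (‖u‖‖v‖)`. -/
noncomputable def deltaP {d : ℕ} (u v : EuclideanSpace ℝ (Fin d)) : ℝ :=
  |(inner ℝ u v : ℝ)| / (‖u‖ * ‖v‖)

lemma Matrix.star_eq_transpose_real {ι : Type*} (M : Matrix ι ι ℝ) : star M = Mᵀ := by
  rw [star_eq_conjTranspose, conjTranspose_eq_transpose_of_trivial]

lemma pi_norm_eq_of_forall_abs_le {ι : Type*} [Fintype ι] {s : ι → ℝ} {i : ι}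
    (hs : ∀ j, |s j| ≤ s i) : ‖s‖ = s i :=
  le_antisymm ((pi_norm_le_iff_of_nonneg ((abs_nonneg _).trans (hs i))).mpr hs)
    ((le_abs_self _).trans (norm_le_pi_norm s i))

lemma EuclideanSpace.norm_le_mul_norm_of_abs_le {ι : Type*} [Fintype ι]
    {x y : EuclideanSpace ℝ ι} {c : ℝ} (hc : 0 ≤ c) (h : ∀ i, |x i| ≤ c * |y i|) :
    ‖x‖ ≤ c * ‖y‖ := by
  refine (sq_le_sq₀ (norm_nonneg _) (by positivity)).mp ?_
  rw [mul_pow, EuclideanSpace.norm_sq_eq, EuclideanSpace.norm_sq_eq, Finset.mul_sum]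
  refine Finset.sum_le_sum fun i _ ↦ ?_
  simpa [mul_pow] using pow_le_pow_left₀ (abs_nonneg _) (h i) 2

section
variable {ι : Type*} [Fintype ι] [DecidableEq ι]

lemma toEuclideanCLM_mem_unitary {M : Matrix ι ι ℝ} (hM : M * Mᵀ = 1) :
    toEuclideanCLM (𝕜 := ℝ) M ∈ unitary (EuclideanSpace ℝ ι →L[ℝ] EuclideanSpace ℝ ι) :=
  Unitary.map_mem _ (mem_unitaryGroup_iff.mpr (by rwa [star_eq_transpose_real]))

lemma toEuclideanCLM_transpose (M : Matrix ι ι ℝ) :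
    toEuclideanCLM (𝕜 := ℝ) Mᵀ = star (toEuclideanCLM (𝕜 := ℝ) M) := by
  rw [← map_star, star_eq_transpose_real]

lemma norm_toEuclideanCLM_apply_of_mul_transpose {M : Matrix ι ι ℝ} (hM : M * Mᵀ = 1)
    (x : EuclideanSpace ℝ ι) : ‖toEuclideanCLM (𝕜 := ℝ) M x‖ = ‖x‖ :=
  ContinuousLinearMap.norm_map_of_mem_unitary (toEuclideanCLM_mem_unitary hM) x

lemma norm_toEuclideanCLM_transpose_apply_of_mul_transpose {M : Matrix ι ι ℝ}
    (hM : M * Mᵀ = 1) (x : EuclideanSpace ℝ ι) : ‖toEuclideanCLM (𝕜 := ℝ) Mᵀ x‖ = ‖x‖ :=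
  norm_toEuclideanCLM_apply_of_mul_transpose
    (by rw [transpose_transpose]; exact mul_eq_one_comm.mp hM) x

lemma inner_toEuclideanCLM_transpose_single (M : Matrix ι ι ℝ) (i : ι)
    (x : EuclideanSpace ℝ ι) :
    inner ℝ (toEuclideanCLM (𝕜 := ℝ) Mᵀ (EuclideanSpace.single i 1)) x =
      toEuclideanCLM (𝕜 := ℝ) M x i := by
  rw [toEuclideanCLM_transpose, ContinuousLinearMap.star_eq_adjoint,
    ContinuousLinearMap.adjoint_inner_left, EuclideanSpace.inner_single_left, map_one, one_mul]

lemma norm_toEuclideanCLM_orthogonal_mul_mul {K L : Matrix ι ι ℝ} (hK : K * Kᵀ = 1)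
    (hL : L * Lᵀ = 1) (M : Matrix ι ι ℝ) :
    ‖toEuclideanCLM (𝕜 := ℝ) (K * M * L)‖ = ‖toEuclideanCLM (𝕜 := ℝ) M‖ := by
  simp only [map_mul]
  rw [CStarRing.norm_mul_mem_unitary (toEuclideanCLM (𝕜 := ℝ) K * toEuclideanCLM (𝕜 := ℝ) M)
      (toEuclideanCLM_mem_unitary hL),
    CStarRing.norm_mem_unitary_mul _ (toEuclideanCLM_mem_unitary hK)]

lemma norm_toEuclideanCLM_orthogonal_mul_mul_apply {K : Matrix ι ι ℝ} (hK : K * Kᵀ = 1)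
    (M L : Matrix ι ι ℝ) (x : EuclideanSpace ℝ ι) :
    ‖toEuclideanCLM (𝕜 := ℝ) (K * M * L) x‖ =
      ‖toEuclideanCLM (𝕜 := ℝ) M (toEuclideanCLM (𝕜 := ℝ) L x)‖ := by
  simp only [map_mul]
  exact norm_toEuclideanCLM_apply_of_mul_transpose hK _

lemma toEuclideanCLM_diagonal_apply (s : ι → ℝ) (x : EuclideanSpace ℝ ι) (i : ι) :
    toEuclideanCLM (𝕜 := ℝ) (diagonal s) x i = s i * x i := by
  rw [ofLp_toEuclideanCLM, mulVec_diagonal]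

open scoped Matrix.Norms.L2Operator in
lemma norm_toEuclideanCLM_diagonal (s : ι → ℝ) :
    ‖toEuclideanCLM (𝕜 := ℝ) (diagonal s)‖ = ‖s‖ :=
  l2_opNorm_diagonal s

lemma abs_mul_abs_le_norm_toEuclideanCLM_diagonal_apply (s : ι → ℝ) (u : EuclideanSpace ℝ ι)
    (i : ι) : |s i| * |u i| ≤ ‖toEuclideanCLM (𝕜 := ℝ) (diagonal s) u‖ := by
  simpa [toEuclideanCLM_diagonal_apply, abs_mul] using
    PiLp.norm_apply_le (toEuclideanCLM (𝕜 := ℝ) (diagonal s) u) i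

lemma norm_toEuclideanCLM_diagonal_apply_le (s : ι → ℝ) (u : EuclideanSpace ℝ ι) (i : ι)
    {c : ℝ} (hc : 0 ≤ c) (hs : ∀ j ≠ i, |s j| ≤ c) :
    ‖toEuclideanCLM (𝕜 := ℝ) (diagonal s) u‖ ≤ |s i| * |u i| + c * ‖u‖ := by
  set y := toEuclideanCLM (𝕜 := ℝ) (diagonal s) u
  have hrest : ‖y - EuclideanSpace.single i (y i)‖ ≤ c * ‖u‖ := by
    refine EuclideanSpace.norm_le_mul_norm_of_abs_le hc fun j ↦ ?_
    by_cases hj : j = i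
    · subst hj; simp; positivity
    · simpa [y, hj, toEuclideanCLM_diagonal_apply, abs_mul] using
        mul_le_mul_of_nonneg_right (hs j hj) (abs_nonneg (u j))
  calc ‖y‖ = ‖EuclideanSpace.single i (y i) + (y - EuclideanSpace.single i (y i))‖ := by
        rw [add_sub_cancel]
    _ ≤ |s i| * |u i| + c * ‖u‖ := by
      grw [norm_add_le, hrest]
      simp [y, toEuclideanCLM_diagonal_apply]

end

/-- for `A = K D L` a singular value decomposition of an invertible matrix
(`K, L` orthogonal, `D = diagonal s` with `s` positive and decreasing) and any nonzero
`v`, writing `w = Lᵀ e₀` for the top singular direction of `A*`: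
`δ_P(ῡ₊(A*), v̄) ≤ ‖Av‖/(‖A‖‖v‖) ≤ δ_P(ῡ₊(A*), v̄) + γ₁₂(A)`. -/
theorem stmt6 {d : ℕ} (hd : 2 ≤ d) (K L A : Matrix (Fin d) (Fin d) ℝ)
    (hK : K * Kᵀ = 1) (hL : L * Lᵀ = 1)
    (s : Fin d → ℝ) (hpos : ∀ i, 0 < s i) (hanti : Antitone s)
    (hA : A = K * Matrix.diagonal s * L)
    (v : EuclideanSpace ℝ (Fin d)) (hv : v ≠ 0) :
    deltaP (euc Lᵀ (EuclideanSpace.single ⟨0, by omega⟩ 1)) v ≤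
        ‖euc A v‖ / (‖euc A‖ * ‖v‖) ∧
      ‖euc A v‖ / (‖euc A‖ * ‖v‖) ≤
        deltaP (euc Lᵀ (EuclideanSpace.single ⟨0, by omega⟩ 1)) v +
          s ⟨1, by omega⟩ / s ⟨0, by omega⟩ := by
  set i₀ : Fin d := ⟨0, by omega⟩
  set i₁ : Fin d := ⟨1, by omega⟩
  set D := toEuclideanCLM (𝕜 := ℝ) (diagonal s)
  set u := toEuclideanCLM (𝕜 := ℝ) L v
  have hs_abs (j : Fin d) : |s j| = s j := abs_of_pos (hpos j)
  have hnorm : ‖D‖ = s i₀ := (norm_toEuclideanCLM_diagonal s).trans <|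
    pi_norm_eq_of_forall_abs_le fun j ↦
      (hs_abs j).trans_le (hanti (Fin.le_def.mpr (Nat.zero_le _)))
  have hlower : s i₀ * |u i₀| ≤ ‖D u‖ := by
    simpa only [hs_abs] using abs_mul_abs_le_norm_toEuclideanCLM_diagonal_apply s u i₀
  have hupper : ‖D u‖ ≤ s i₀ * |u i₀| + s i₁ * ‖v‖ := by
    rw [← hs_abs i₀, ← norm_toEuclideanCLM_apply_of_mul_transpose hL v]
    refine norm_toEuclideanCLM_diagonal_apply_le s u i₀ (hpos i₁).le fun j hj ↦ ?_
    exact (hs_abs j).trans_le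
      (hanti (Fin.le_def.mpr (Nat.one_le_iff_ne_zero.mpr fun h ↦ hj (Fin.ext h))))
  have hv' : 0 < ‖v‖ := norm_pos_iff.mpr hv
  have hs₀ := hpos i₀
  subst hA
  simp only [deltaP, euc]
  rw [inner_toEuclideanCLM_transpose_single,
    norm_toEuclideanCLM_transpose_apply_of_mul_transpose hL, PiLp.norm_single, norm_one, one_mul,
    norm_toEuclideanCLM_orthogonal_mul_mul_apply hK, norm_toEuclideanCLM_orthogonal_mul_mul hK hL,
    hnorm]
  constructor
  · calc |u i₀| / ‖v‖ = s i₀ * |u i₀| / (s i₀ * ‖v‖) := by field_simp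
      _ ≤ ‖D u‖ / (s i₀ * ‖v‖) := by gcongr
  · calc ‖D u‖ / (s i₀ * ‖v‖) ≤ (s i₀ * |u i₀| + s i₁ * ‖v‖) / (s i₀ * ‖v‖) := by gcongr
      _ = |u i₀| / ‖v‖ + s i₁ / s i₀ := by field_simp
end

section
/- (Nonexistence of Gibbs-type measures for large negative t.) Let (Σ, σ) be the full shift on three symbols and A₁ = diag(λ, 1/λ) with λ > 1, A₂ = [[0,1],[1,0]], A₃ a rotation matrix, all in SL₂(ℝ) with A₂, A₃ orthogonal. Suppose μ is a σ-invariant probability measure and there exist C > 0 and P with log 2 ≤ P ≤ log 3 such that C^{-1} ≤ μ([I]) / (e^{−n P} ‖A^n(I)‖^t) ≤ C for all n and all words I of length n. Then t ≥ −log(9/2)/log λ. In other words, for t < −log(9/2)/log λ no Gibbs-type measure with pressure P ∈ [log 2, log 3] exists. -/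
/-! Conjugating the swap `A 1` by a matrix `diag(a, a⁻¹)` gives back the swap, so the word
`0ⁿ 1 0ⁿ` has product `A 0 ^ n * A 1 * A 0 ^ n = A 1` of norm `1`, while its prefix `0ⁿ` has
product of norm `λⁿ`. The cylinder of the longer word lies in that of the prefix, so the Gibbs
bounds give `e^{-(2n+1)P} ≤ C² e^{-nP} λ^{nt}`, that is `n (-P - t log λ) ≤ P + 2 log C` for every
`n`. Hence `t log λ ≥ -P ≥ -log 3 > -log (9/2)`. -/

open Filter Topology Matrix MeasureTheory

/-- The rotation matrix by angle `θ`. -/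
noncomputable def rotMat (θ : ℝ) : Matrix (Fin 2) (Fin 2) ℝ :=
  !![Real.cos θ, -Real.sin θ; Real.sin θ, Real.cos θ]

/-- The product `A^n(I) = A_{I(n-1)} ⋯ A_{I(0)}` along a word. -/
def wordProd {m : ℕ} (A : Fin m → Matrix (Fin 2) (Fin 2) ℝ) :
    (n : ℕ) → (Fin n → Fin m) → Matrix (Fin 2) (Fin 2) ℝ
  | 0, _ => 1
  | n + 1, I => A (I (Fin.last n)) * wordProd A n (fun k => I k.castSucc)

/-- The cylinder of a word in the full shift on `m` symbols. -/
def cylF {m n : ℕ} (I : Fin n → Fin m) : Set (ℕ → Fin m) :=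
  {x | ∀ k : Fin n, x (k : ℕ) = I k}

open scoped Matrix.Norms.L2Operator

lemma norm_euc_eq_one_of_mem_unitary {d : ℕ} [NeZero d] {U : Matrix (Fin d) (Fin d) ℝ}
    (hU : U ∈ unitary (Matrix (Fin d) (Fin d) ℝ)) : ‖euc U‖ = 1 :=
  show ‖U‖ = 1 from CStarRing.norm_of_mem_unitary hU

lemma swap_mem_unitary : !![(0 : ℝ), 1; 1, 0] ∈ unitary (Matrix (Fin 2) (Fin 2) ℝ) := by
  rw [Unitary.mem_iff, star_eq_conjTranspose]
  constructor <;> ext i j <;> fin_cases i <;> fin_cases j <;> simp [Matrix.mul_apply]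

lemma norm_euc_diagonal_inv {a : ℝ} (ha : 1 ≤ a) : ‖euc (diagonal ![a, a⁻¹])‖ = a := by
  have ha₀ : 0 ≤ a := zero_le_one.trans ha
  have hinv : a⁻¹ ≤ a := (inv_le_one_of_one_le₀ ha).trans ha
  change ‖(diagonal ![a, a⁻¹] : Matrix (Fin 2) (Fin 2) ℝ)‖ = a
  rw [l2_opNorm_diagonal]
  refine le_antisymm ((pi_norm_le_iff_of_nonneg ha₀).2 ?_) ?_
  · simp [Fin.forall_fin_two, abs_of_nonneg ha₀, hinv]
  · simpa [abs_of_nonneg ha₀] using norm_le_pi_norm ![a, a⁻¹] 0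

lemma diagonal_inv_pow (a : ℝ) (n : ℕ) :
    diagonal ![a, a⁻¹] ^ n = diagonal ![a ^ n, (a ^ n)⁻¹] := by
  rw [diagonal_pow]
  congr 1
  ext i
  fin_cases i <;> simp [inv_pow]

lemma diagonal_inv_mul_swap_mul_diagonal_inv {a : ℝ} (ha : a ≠ 0) :
    diagonal ![a, a⁻¹] * !![(0 : ℝ), 1; 1, 0] * diagonal ![a, a⁻¹] = !![(0 : ℝ), 1; 1, 0] := by
  ext i j
  fin_cases i <;> fin_cases j <;> simp [ha]

section Words

variable {m : ℕ} (A : Fin m → Matrix (Fin 2) (Fin 2) ℝ)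

lemma wordProd_snoc {n : ℕ} (I : Fin n → Fin m) (i : Fin m) :
    wordProd A (n + 1) (Fin.snoc I i) = A i * wordProd A n I := by
  simp [wordProd]

lemma wordProd_append {k : ℕ} (I : Fin k → Fin m) : ∀ {n : ℕ} (J : Fin n → Fin m),
    wordProd A (k + n) (Fin.append I J) = wordProd A n J * wordProd A k I
  | 0, J => by
    rw [Fin.append_right_nil I J rfl]
    simp [wordProd]
  | n + 1, J => by
    rw [← Fin.snoc_init_self J, Fin.append_snoc]
    show wordProd A (k + n + 1) _ = _
    rw [wordProd_snoc, wordProd_snoc, wordProd_append I (Fin.init J), mul_assoc]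

lemma wordProd_const (n : ℕ) (i : Fin m) : wordProd A n (fun _ => i) = A i ^ n := by
  induction n with
  | zero => rfl
  | succ n ih => rw [pow_succ', ← ih]; rfl

end Words

lemma cylF_append_subset {m k n : ℕ} (I : Fin k → Fin m) (J : Fin n → Fin m) :
    cylF (Fin.append I J) ⊆ cylF I := fun x hx i => by
  simpa using hx (Fin.castAdd n i)

lemma nonpos_of_forall_nat_mul_le {x K : ℝ} (h : ∀ n : ℕ, 0 < n → n * x ≤ K) : x ≤ 0 := by
  by_contra! hx
  obtain ⟨n, hn⟩ := exists_nat_gt (K / x)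
  have := h (n + 1) n.succ_pos
  rw [div_lt_iff₀ hx] at hn
  push_cast at this
  linarith

lemma gibbs_weight_le_of_cylF_subset {m : ℕ} {A : Fin m → Matrix (Fin 2) (Fin 2) ℝ}
    {μ : Measure (ℕ → Fin m)} [IsFiniteMeasure μ] {C P t : ℝ} (hC : 0 < C)
    (hGibbs : ∀ n : ℕ, 0 < n → ∀ I : Fin n → Fin m,
      C⁻¹ * (Real.exp (-(P * n)) * ‖euc (wordProd A n I)‖ ^ t) ≤ (μ (cylF I)).toReal ∧
      (μ (cylF I)).toReal ≤ C * (Real.exp (-(P * n)) * ‖euc (wordProd A n I)‖ ^ t))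
    {k n : ℕ} (hk : 0 < k) (hn : 0 < n) {I : Fin k → Fin m} {J : Fin n → Fin m}
    (hJI : cylF J ⊆ cylF I) :
    Real.exp (-(P * n)) * ‖euc (wordProd A n J)‖ ^ t ≤
      C ^ 2 * (Real.exp (-(P * k)) * ‖euc (wordProd A k I)‖ ^ t) := by
  have h := (hGibbs n hn J).1.trans ((measureReal_mono hJI).trans (hGibbs k hk I).2)
  rwa [inv_mul_le_iff₀ hC, ← mul_assoc, ← sq] at h

theorem stmt18_general (lam : ℝ) (hlam : 1 < lam)
    (A : Fin 3 → Matrix (Fin 2) (Fin 2) ℝ)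
    (hA1 : A 0 = Matrix.diagonal ![lam, lam⁻¹])
    (hA2 : A 1 = !![(0 : ℝ), 1; 1, 0])
    (μ : Measure (ℕ → Fin 3)) [IsProbabilityMeasure μ]
    (C P t : ℝ) (hC : 0 < C) (hP2 : P ≤ Real.log 3)
    (hGibbs : ∀ n : ℕ, 0 < n → ∀ I : Fin n → Fin 3,
      C⁻¹ * (Real.exp (-(P * n)) * ‖euc (wordProd A n I)‖ ^ t) ≤ (μ (cylF I)).toReal ∧
      (μ (cylF I)).toReal ≤ C * (Real.exp (-(P * n)) * ‖euc (wordProd A n I)‖ ^ t)) :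
    -Real.log (9 / 2) / Real.log lam ≤ t := by
  have hlog : 0 < Real.log lam := Real.log_pos hlam
  have hgrowth : ∀ n : ℕ, 0 < n → n * (-P - t * Real.log lam) ≤ P + 2 * Real.log C := by
    intro n hn
    let I : Fin n → Fin 3 := fun _ => 0
    have hI : ‖euc (wordProd A n I)‖ = lam ^ n := by
      rw [wordProd_const, hA1, diagonal_inv_pow, norm_euc_diagonal_inv (one_le_pow₀ hlam.le)]
    let J := Fin.append I (Fin.append (fun _ : Fin 1 => 1) I)
    have hJ : ‖euc (wordProd A _ J)‖ = 1 := by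
      rw [wordProd_append, wordProd_append, wordProd_const, wordProd_const, pow_one, hA1, hA2,
        diagonal_inv_pow, diagonal_inv_mul_swap_mul_diagonal_inv (by positivity),
        norm_euc_eq_one_of_mem_unitary swap_mem_unitary]
    have h := gibbs_weight_le_of_cylF_subset (J := J) hC hGibbs hn (by omega)
      (cylF_append_subset I _)
    rw [hI, hJ, Real.one_rpow, mul_one] at h
    have h := Real.log_le_log (Real.exp_pos _) h
    rw [Real.log_exp, Real.log_mul (by positivity) (by positivity),
      Real.log_mul (by positivity) (by positivity), Real.log_pow, Real.log_exp,
      Real.log_rpow (by positivity), Real.log_pow] at h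
    push_cast at h
    linarith
  have hrate := nonpos_of_forall_nat_mul_le hgrowth
  have hlog3 : Real.log 3 ≤ Real.log (9 / 2) := Real.log_le_log (by norm_num) (by norm_num)
  rw [div_le_iff₀ hlog]
  linarith

/-- nonexistence of Gibbs-type measures for large negative `t`: for the
full shift on three symbols with `A₁ = diag(λ, 1/λ)` (`λ > 1`), `A₂ = [[0,1],[1,0]]`,
`A₃` a rotation, if a probability measure `μ` satisfies the Gibbs bounds with constants
`C > 0` and `P ∈ [log 2, log 3]` for the potentials `t log ‖A^n‖`, then
`t ≥ −log(9/2)/log λ`. -/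
theorem stmt18 (lam θ : ℝ) (hlam : 1 < lam)
    (A : Fin 3 → Matrix (Fin 2) (Fin 2) ℝ)
    (hA1 : A 0 = Matrix.diagonal ![lam, lam⁻¹])
    (hA2 : A 1 = !![(0 : ℝ), 1; 1, 0]) (hA3 : A 2 = rotMat θ)
    (μ : Measure (ℕ → Fin 3)) [IsProbabilityMeasure μ]
    (C P t : ℝ) (hC : 0 < C) (hP1 : Real.log 2 ≤ P) (hP2 : P ≤ Real.log 3)
    (hGibbs : ∀ n : ℕ, 0 < n → ∀ I : Fin n → Fin 3,
      C⁻¹ * (Real.exp (-(P * n)) * ‖euc (wordProd A n I)‖ ^ t) ≤ (μ (cylF I)).toReal ∧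
      (μ (cylF I)).toReal ≤ C * (Real.exp (-(P * n)) * ‖euc (wordProd A n I)‖ ^ t)) :
    -Real.log (9 / 2) / Real.log lam ≤ t :=
  stmt18_general lam hlam A hA1 hA2 μ C P t hC hP2 hGibbs
end
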